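/- Let d ≥ 1, l ≥ 2, let E ⊆ ℝ^d be compact, and let φ₂, …, φ_l : ℝ^d → ℝ^d be continuous functions. Set F = { (x, φ₂(x), …, φ_l(x)) : x ∈ E } ⊆ ℝ^{ld}. Suppose there exists x₀ ∈ E such that the pinned distance set Δ^{x₀}(E) = { |x₀ − y| : y ∈ E } has non-empty interior in ℝ. Then the restricted distance set Δ°^F(E) = { |w − (y₁, …, y_l)| : w ∈ F, y₁, …, y_l ∈ E, y_i ≠ y_j for all i ≠ j } also has non-empty interior in ℝ, where |·| denotes the Euclidean norm on ℝ^{ld}. -/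
import Mathlib


open MeasureTheory
open scoped ENNReal

/-- Let `d ≥ 1`, `l ≥ 2`, `E ⊆ ℝ^d` compact, and let
`φ₁ = id, φ₂, …, φ_l : ℝ^d → ℝ^d` be continuous, with
`F = { (x, φ₂(x), …, φ_l(x)) : x ∈ E } ⊆ ℝ^{ld}`. If for some `x₀ ∈ E` the pinned distance
set `Δ^{x₀}(E) = { |x₀ − y| : y ∈ E }` has nonempty interior in `ℝ`, then the restricted
distance set `Δ°^F(E) = { |w − (y₁,…,y_l)| : w ∈ F, yᵢ ∈ E, yᵢ ≠ yⱼ for i ≠ j }`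
(Euclidean norm on `ℝ^{ld}`) has nonempty interior in `ℝ`. -/
theorem stmt_13 (d l : ℕ) (hd : 1 ≤ d) (hl : 2 ≤ l)
    (E : Set (EuclideanSpace ℝ (Fin d))) (hE : IsCompact E)
    (φ : Fin l → EuclideanSpace ℝ (Fin d) → EuclideanSpace ℝ (Fin d))
    (hφ0 : ∀ x, φ ⟨0, by omega⟩ x = x) (hφc : ∀ i, Continuous (φ i))
    (hpin : ∃ x₀ ∈ E,
      (interior { t : ℝ | ∃ y ∈ E, t = ‖x₀ - y‖ }).Nonempty) :
    (interior { t : ℝ | ∃ x ∈ E, ∃ y : Fin l → EuclideanSpace ℝ (Fin d),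
        (∀ i, y i ∈ E) ∧ (∀ i j, i ≠ j → y i ≠ y j) ∧
        t = Real.sqrt (∑ i, ‖φ i x - y i‖ ^ 2) }).Nonempty := by
  classical
  obtain ⟨x₀, hx₀E, t₀, ht₀⟩ := hpin
  set D : Set ℝ := { t : ℝ | ∃ y ∈ E, t = ‖x₀ - y‖ } with hDdef
  set i0 : Fin l := ⟨0, by omega⟩ with hi0
  -- interior D is infinite
  obtain ⟨ε, hε, hball⟩ := Metric.isOpen_iff.1 isOpen_interior t₀ ht₀
  have hioo : Set.Ioo (t₀ - ε) (t₀ + ε) ⊆ interior D := by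
    rw [← Real.ball_eq_Ioo]; exact hball
  have hint_inf : (interior D).Infinite :=
    (Set.Ioo_infinite (by linarith)).mono hioo
  -- E is infinite
  have hE_inf : E.Infinite := by
    intro hEfin
    have hDfin : D.Finite := by
      refine (hEfin.image (fun y => ‖x₀ - y‖)).subset ?_
      rintro t ⟨y, hy, rfl⟩
      exact ⟨y, hy, rfl⟩
    exact (hint_inf.mono interior_subset) hDfin
  -- pick l distinct points of E
  let e := hE_inf.natEmbedding
  let z : Fin l → EuclideanSpace ℝ (Fin d) := fun i => (e (i : ℕ) : EuclideanSpace ℝ (Fin d))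
  have hzE : ∀ i, z i ∈ E := fun i => (e (i : ℕ)).2
  have hz_inj : Function.Injective z := by
    intro i j h
    have h2 : e (i : ℕ) = e (j : ℕ) := Subtype.ext h
    have := e.injective h2
    exact Fin.ext this
  set C : ℝ := ∑ i ∈ Finset.univ.erase i0, ‖φ i x₀ - z i‖ ^ 2 with hCdef
  have hC0 : 0 ≤ C := Finset.sum_nonneg (fun i _ => sq_nonneg _)
  set S : Set ℝ := Set.range (fun i : Fin l => ‖x₀ - z i‖) with hSdef
  have hSfin : S.Finite := Set.finite_range _
  set U : Set ℝ := interior D \ S with hUdef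
  have hUopen : IsOpen U := isOpen_interior.sdiff hSfin.isClosed
  have hUne : U.Nonempty := (hint_inf.diff hSfin).nonempty
  obtain ⟨t₁, ht₁⟩ := hUne
  obtain ⟨ε₁, hε₁, hball₁⟩ := Metric.isOpen_iff.1 hUopen t₁ ht₁
  have ht₁0 : 0 ≤ t₁ := by
    obtain ⟨y, _, rfl⟩ := interior_subset ht₁.1
    exact norm_nonneg _
  set a : ℝ := t₁ with hadef
  set b : ℝ := t₁ + ε₁ / 2 with hbdef
  have hab : a < b := by simp [hadef, hbdef]; linarith
  have hIoosub : Set.Ioo a b ⊆ U := by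
    intro t ht
    apply hball₁
    rw [Real.ball_eq_Ioo]
    have h2 : t < b := ht.2
    rw [hbdef] at h2
    exact ⟨by linarith [ht.1], by linarith⟩
  set f : ℝ → ℝ := fun t => Real.sqrt (t ^ 2 + C) with hfdef
  have hfc : Continuous f :=
    Real.continuous_sqrt.comp ((continuous_pow 2).add continuous_const)
  have hfab : f a < f b := by
    apply Real.sqrt_lt_sqrt (by positivity)
    nlinarith
  have hivt : Set.Ioo (f a) (f b) ⊆ f '' Set.Ioo a b :=
    intermediate_value_Ioo hab.le hfc.continuousOn
  set T : Set ℝ := { t : ℝ | ∃ x ∈ E, ∃ y : Fin l → EuclideanSpace ℝ (Fin d),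
        (∀ i, y i ∈ E) ∧ (∀ i j, i ≠ j → y i ≠ y j) ∧
        t = Real.sqrt (∑ i, ‖φ i x - y i‖ ^ 2) } with hTdef
  have himg : f '' Set.Ioo a b ⊆ T := by
    rintro s ⟨t, ht, rfl⟩
    have htU := hIoosub ht
    obtain ⟨y₁, hy₁E, hty⟩ := interior_subset htU.1
    have hy₁z : ∀ i, y₁ ≠ z i := by
      intro i h
      refine htU.2 ⟨i, ?_⟩
      show ‖x₀ - z i‖ = t
      rw [← h, ← hty]
    set y : Fin l → EuclideanSpace ℝ (Fin d) := fun i => if i = i0 then y₁ else z i with hydef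
    refine ⟨x₀, hx₀E, y, ?_, ?_, ?_⟩
    · intro i
      by_cases h : i = i0 <;> simp [hydef, h, hy₁E, hzE i]
    · intro i j hij
      by_cases hi : i = i0 <;> by_cases hj : j = i0
      · exact absurd (hi.trans hj.symm) hij
      · simp only [hydef, if_pos hi, if_neg hj]
        exact hy₁z j
      · simp only [hydef, if_neg hi, if_pos hj]
        exact fun h => hy₁z i h.symm
      · simp only [hydef, if_neg hi, if_neg hj]
        exact fun h => hij (hz_inj h)
    · have hsum : ∑ i, ‖φ i x₀ - y i‖ ^ 2 = t ^ 2 + C := by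
        rw [← Finset.add_sum_erase _ _ (Finset.mem_univ i0)]
        congr 1
        · have h1 : y i0 = y₁ := if_pos rfl
          have h2 : φ i0 x₀ = x₀ := hφ0 x₀
          rw [h1, h2, ← hty]
        · refine Finset.sum_congr rfl ?_
          intro i hi
          have : i ≠ i0 := (Finset.mem_erase.1 hi).1
          simp [hydef, this]
      simp only [hfdef]
      rw [hsum]
  have hsub : Set.Ioo (f a) (f b) ⊆ interior T :=
    interior_maximal (fun s hs => himg (hivt hs)) isOpen_Ioo
  exact (Set.nonempty_Ioo.2 hfab).mono hsub
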